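/- (Solomon–Terao formula for free arrangements, derived from the Hilbert-series identity.) Let A be a free central essential arrangement of rank ℓ with exponents e₁,…,e_ℓ, so that D_p(A) = Λ^p D(A) is free with basis in degrees e_{i₁}+⋯+e_{i_p}−p (i₁<⋯<i_p), and hence h(D_p(A); t) = Σ_{i₁<⋯<i_p} t^{(e_{i₁}−1)+⋯+(e_{i_p}−1)} / (1−t)^ℓ. Then the polynomial Ψ_A(s, t) = Σ_{p=0}^{ℓ} h(D_p(A); t) t^p (s(1−t) − 1)^p satisfies Ψ_A(s, 1) = (−1)^ℓ χ(A, −s) = Π_{i=1}^ℓ (s + e_i). -/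
import Mathlib


/- STATEMENT 16: Solomon–Terao formula for free arrangements, derived from the
Hilbert-series identity.  For a free central essential arrangement of rank ℓ
with exponents e₁,…,e_ℓ, the module D_p(A) = Λ^p D(A) has Hilbert series
  h(D_p; t) = (Σ_{|I|=p} t^{Σ_{i∈I}(eᵢ−1)})/(1−t)^ℓ,
and Ψ_A(s,t) = Σ_p h(D_p;t) t^p (s(1−t)−1)^p is a polynomial with
Ψ_A(s,1) = (−1)^ℓ χ(A,−s) = Π (s + eᵢ) (using Terao: χ(A,t) = Π (t−eᵢ)).
Formalization: G := (1−t)^ℓ Ψ_A = Σ_p N_p t^p (s(1−t)−1)^p with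
N_p = Σ_{|I|=p} t^{Σ_{i∈I}(eᵢ−1)}; we claim (1−t)^ℓ ∣ G and the quotient Ψ
satisfies Ψ(s,1) = (−1)^ℓ χ(A,−s) = Π (s+eᵢ).  Here `s = X 0`, `t = X 1`. -/

open MvPolynomial

/-- Numerator of the Hilbert series of `D_p(A)` for a free arrangement with
exponents `e`. -/
noncomputable def freeNum (ℓ : ℕ) (e : Fin ℓ → ℕ) (p : ℕ) : MvPolynomial (Fin 2) ℤ :=
  ∑ I ∈ Finset.powersetCard p (Finset.univ : Finset (Fin ℓ)),
    (X 1 : MvPolynomial (Fin 2) ℤ) ^ (∑ i ∈ I, (e i - 1))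

/-- `(1−t)^ℓ · Ψ_A(s,t) = Σ_{p=0}^{ℓ} N_p(t) · t^p · (s(1−t)−1)^p`. -/
noncomputable def GST (ℓ : ℕ) (e : Fin ℓ → ℕ) : MvPolynomial (Fin 2) ℤ :=
  ∑ p ∈ Finset.range (ℓ + 1),
    freeNum ℓ e p * (X 1) ^ p * (X 0 * (1 - X 1) - 1) ^ p

lemma factor_eq (n : ℕ) :
    (1 : MvPolynomial (Fin 2) ℤ) + X 1 ^ n * (X 0 * (1 - X 1) - 1)
      = (1 - X 1) * (X 0 * X 1 ^ n + ∑ j ∈ Finset.range n, X 1 ^ j) := by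
  linear_combination geom_sum_mul (X 1 : MvPolynomial (Fin 2) ℤ) n

lemma GST_eq (ℓ : ℕ) (e : Fin ℓ → ℕ) (he : ∀ i, 1 ≤ e i) :
    GST ℓ e = ∏ i, ((1 : MvPolynomial (Fin 2) ℤ) + X 1 ^ e i * (X 0 * (1 - X 1) - 1)) := by
  classical
  set u : MvPolynomial (Fin 2) ℤ := X 0 * (1 - X 1) - 1 with hu
  have key : ∀ i : Fin ℓ, (1 : MvPolynomial (Fin 2) ℤ) + X 1 ^ e i * u
      = X 1 ^ e i * u + 1 := fun i => add_comm _ _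
  simp_rw [key]
  rw [Finset.prod_add]
  simp only [Finset.prod_const_one, mul_one]
  rw [Finset.sum_powerset]
  rw [Finset.card_univ, Fintype.card_fin]
  unfold GST freeNum
  refine Finset.sum_congr rfl fun p hp => ?_
  rw [Finset.sum_mul, Finset.sum_mul]
  refine Finset.sum_congr rfl fun I hI => ?_
  have hcard : I.card = p := (Finset.mem_powersetCard.mp hI).2
  rw [Finset.prod_mul_distrib, Finset.prod_const, hcard,
    Finset.prod_pow_eq_pow_sum]
  have hsum : ∑ i ∈ I, e i = (∑ i ∈ I, (e i - 1)) + p := by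
    rw [← hcard, Finset.card_eq_sum_ones, ← Finset.sum_add_distrib]
    exact Finset.sum_congr rfl fun i _ => (Nat.sub_add_cancel (he i)).symm
  rw [hsum, pow_add, mul_assoc]

/-- Solomon–Terao for free arrangements: `Ψ_A` is a polynomial and
`Ψ_A(s,1) = (−1)^ℓ χ(A,−s) = Π (s + eᵢ)`. -/
theorem solomon_terao_free (ℓ : ℕ) (e : Fin ℓ → ℕ) (he : ∀ i, 1 ≤ e i) :
    ∃ Ψ : MvPolynomial (Fin 2) ℤ,
      GST ℓ e = (1 - X 1) ^ ℓ * Ψ ∧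
      ∀ s : ℤ,
        MvPolynomial.eval (fun j : Fin 2 => if j = 0 then s else 1) Ψ =
            (-1) ^ ℓ * Polynomial.eval (-s) (∏ i, (Polynomial.X - Polynomial.C (e i : ℤ))) ∧
          (-1 : ℤ) ^ ℓ * Polynomial.eval (-s) (∏ i, (Polynomial.X - Polynomial.C (e i : ℤ))) =
            ∏ i, (s + (e i : ℤ)) := by
  refine ⟨∏ i, (X 0 * X 1 ^ e i + ∑ j ∈ Finset.range (e i), X 1 ^ j), ?_, ?_⟩
  · rw [GST_eq ℓ e he]
    simp_rw [factor_eq]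
    rw [Finset.prod_mul_distrib, Finset.prod_const, Finset.card_univ, Fintype.card_fin]
  · intro s
    have hprod : Polynomial.eval (-s) (∏ i, (Polynomial.X - Polynomial.C (e i : ℤ)))
        = ∏ i : Fin ℓ, (-s - (e i : ℤ)) := by
      simp [Polynomial.eval_prod]
    have hneg : ((-1 : ℤ)) ^ ℓ * ∏ i : Fin ℓ, (-s - (e i : ℤ)) = ∏ i, (s + (e i : ℤ)) := by
      have h1 : ∀ i : Fin ℓ, (-s - (e i : ℤ)) = (-1) * (s + (e i : ℤ)) := fun i => by ring
      simp_rw [h1]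
      rw [Finset.prod_mul_distrib, Finset.prod_const, Finset.card_univ, Fintype.card_fin,
        ← mul_assoc, ← mul_pow, neg_mul_neg, one_mul, one_pow, one_mul]
    constructor
    · rw [hprod, hneg]
      rw [map_prod]
      refine Finset.prod_congr rfl fun i _ => ?_
      simp
    · rw [hprod, hneg]
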